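/- Under an affine Gaussian probability path with marginal p_t(x) = ∫ N(x|α_t x₁, σ_t² I) q(x₁) dx₁ and posterior p_t(x₁|x) = N(x|α_t x₁, σ_t² I) q(x₁) / p_t(x), the gradient of the posterior in x satisfies ∇_x p_t(x₁|x) = p_t(x₁|x) · (α_t/σ_t²) · (x₁ − x̂₁), where x̂₁ = ∫ x₁ p_t(x₁|x) dx₁ is the posterior mean (the denoiser). -/

import Mathlib

/-!
The posterior is the joint density `N(x | α x₁, σ² I) q(x₁)` divided by the marginal `p(x)`.
The Gaussian factor has gradient `N · (α x₁ - x) / σ²`, and differentiating under the integral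
sign gives `∇p(x) = (α ∫ y N q dy - p(x) x) / σ² = (α p(x) x̂₁ - p(x) x) / σ²`. In the quotient
rule the `-x` terms cancel, leaving `p(x₁ | x) (α / σ²) (x₁ - x̂₁)`. Splitting that integral needs
`y ↦ N(x | α y, σ² I) q(y) y` to be integrable, which holds because `N(x | α y, σ² I) ‖y‖` is
bounded: `u exp (-u² / 2σ²) ≤ σ`.
-/

open Real MeasureTheory

/-- Gaussian density on `ℝ^d` with mean `μ` and covariance `σ² I`. -/
noncomputable def gaussDensity (d : ℕ) (μ : EuclideanSpace ℝ (Fin d)) (σ : ℝ)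
    (x : EuclideanSpace ℝ (Fin d)) : ℝ :=
  (2 * π * σ ^ 2) ^ (-(d : ℝ) / 2) * Real.exp (-‖x - μ‖ ^ 2 / (2 * σ ^ 2))

/-- The AGPP marginal density `p_t(x) = ∫ N(x|α_t x₁, σ_t² I) q(x₁) dx₁`. -/
noncomputable def marginal (d : ℕ) (αt σt : ℝ) (q : EuclideanSpace ℝ (Fin d) → ℝ)
    (x : EuclideanSpace ℝ (Fin d)) : ℝ :=
  ∫ x₁, gaussDensity d (αt • x₁) σt x * q x₁

/-- The posterior density `p_t(x₁|x) = N(x|α_t x₁, σ_t² I) q(x₁) / p_t(x)`. -/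
noncomputable def posterior (d : ℕ) (αt σt : ℝ) (q : EuclideanSpace ℝ (Fin d) → ℝ)
    (x₁ x : EuclideanSpace ℝ (Fin d)) : ℝ :=
  gaussDensity d (αt • x₁) σt x * q x₁ / marginal d αt σt q x

/-- The denoiser (posterior mean) `x̂₁(x) = ∫ x₁ p_t(x₁|x) dx₁`. -/
noncomputable def denoiser (d : ℕ) (αt σt : ℝ) (q : EuclideanSpace ℝ (Fin d) → ℝ)
    (x : EuclideanSpace ℝ (Fin d)) : EuclideanSpace ℝ (Fin d) :=
  ∫ x₁, posterior d αt σt q x₁ x • x₁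

section Gradient

variable {E : Type*} [NormedAddCommGroup E] [InnerProductSpace ℝ E] [CompleteSpace E]
  {f g : E → ℝ} {f' g' x : E}

theorem HasGradientAt.mul (hf : HasGradientAt f f' x) (hg : HasGradientAt g g' x) :
    HasGradientAt (fun z => f z * g z) (f x • g' + g x • f') x := by
  rw [hasGradientAt_iff_hasFDerivAt] at *
  simpa using hf.fun_mul hg

theorem HasGradientAt.inv (hg : HasGradientAt g g' x) (hx : g x ≠ 0) :
    HasGradientAt (fun z => (g z)⁻¹) (-(g x ^ 2)⁻¹ • g') x := by
  rw [hasGradientAt_iff_hasFDerivAt] at *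
  rw [map_smul]
  exact (hasDerivAt_inv hx).comp_hasFDerivAt x hg

theorem HasGradientAt.div (hf : HasGradientAt f f' x) (hg : HasGradientAt g g' x)
    (hx : g x ≠ 0) :
    HasGradientAt (fun z => f z / g z) ((g x)⁻¹ • f' - (f x / g x ^ 2) • g') x := by
  convert hf.mul (hg.inv hx) using 1
  · simp only [div_eq_mul_inv]
  · rw [smul_smul, mul_neg, neg_smul, div_eq_mul_inv]; abel

theorem HasGradientAt.exp (hf : HasGradientAt f f' x) :
    HasGradientAt (fun z => Real.exp (f z)) (Real.exp (f x) • f') x := by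
  rw [hasGradientAt_iff_hasFDerivAt] at *
  simpa using hf.exp

theorem HasGradientAt.mul_const (hf : HasGradientAt f f' x) (c : ℝ) :
    HasGradientAt (fun z => f z * c) (c • f') x := by
  rw [hasGradientAt_iff_hasFDerivAt] at *
  simpa using hf.mul_const c

theorem HasGradientAt.const_mul (hf : HasGradientAt f f' x) (c : ℝ) :
    HasGradientAt (fun z => c * f z) (c • f') x := by
  rw [hasGradientAt_iff_hasFDerivAt] at *
  simpa using hf.const_mul c

theorem hasGradientAt_norm_sub_sq (μ x : E) :
    HasGradientAt (fun z => ‖z - μ‖ ^ 2) ((2 : ℝ) • (x - μ)) x := by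
  rw [hasGradientAt_iff_hasFDerivAt]
  exact ((hasFDerivAt_id x).sub_const μ).norm_sq.congr_fderiv (by ext v; simp)

end Gradient

theorem hasGradientAt_gaussDensity (d : ℕ) (μ : EuclideanSpace ℝ (Fin d)) (σ : ℝ)
    (x : EuclideanSpace ℝ (Fin d)) :
    HasGradientAt (gaussDensity d μ σ)
      (((σ ^ 2)⁻¹ * gaussDensity d μ σ x) • (μ - x)) x := by
  have := (((hasGradientAt_norm_sub_sq μ x).const_mul (-(2 * σ ^ 2)⁻¹)).exp.const_mul
    ((2 * π * σ ^ 2) ^ (-(d : ℝ) / 2)))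
  convert this using 1
  · ext z; simp only [gaussDensity]; ring_nf
  · simp only [gaussDensity, smul_smul]
    rw [← neg_sub x μ, smul_neg, ← neg_smul]
    congr 1
    ring_nf

theorem integral_mul_smul_sub {E : Type*} [NormedAddCommGroup E] [NormedSpace ℝ E]
    [CompleteSpace E] [MeasurableSpace E] {μ : Measure E} {w : E → ℝ}
    (hw : Integrable w μ) (hwy : Integrable (fun y => w y • y) μ) (s a : ℝ) (x : E) :
    ∫ y, (s * w y) • (a • y - x) ∂μ = s • (a • ∫ y, w y • y ∂μ - (∫ y, w y ∂μ) • x) := by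
  calc ∫ y, (s * w y) • (a • y - x) ∂μ = ∫ y, s • (a • (w y • y) - w y • x) ∂μ := by
        congr with y; module
    _ = s • (a • ∫ y, w y • y ∂μ - (∫ y, w y ∂μ) • x) := by
        rw [integral_smul, integral_sub (hwy.fun_smul a) (hw.smul_const x), integral_smul,
          integral_smul_const]

theorem mul_exp_neg_sq_div_le {σ : ℝ} (hσ : 0 < σ) (u : ℝ) :
    u * exp (-u ^ 2 / (2 * σ ^ 2)) ≤ σ := by
  have hu : u ≤ σ * (u ^ 2 / (2 * σ ^ 2) + 1) := by
    have : σ * (u ^ 2 / (2 * σ ^ 2) + 1) - u = (u - σ) ^ 2 / (2 * σ) + σ / 2 := by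
      field_simp; ring
    linarith [div_nonneg (sq_nonneg (u - σ)) (by positivity : (0 : ℝ) ≤ 2 * σ)]
  rw [neg_div, exp_neg, ← div_eq_mul_inv, div_le_iff₀ (exp_pos _)]
  exact hu.trans (mul_le_mul_of_nonneg_left (add_one_le_exp _) hσ.le)

section Gaussian

variable {d : ℕ} {α σ : ℝ}

theorem gaussDensity_nonneg (μ x : EuclideanSpace ℝ (Fin d)) :
    0 ≤ gaussDensity d μ σ x := by
  unfold gaussDensity; positivity

theorem mul_gaussDensity_mul_norm_le (hα : 0 < α) (hσ : 0 < σ)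
    (x y : EuclideanSpace ℝ (Fin d)) :
    α * (gaussDensity d (α • y) σ x * ‖y‖) ≤ (2 * π * σ ^ 2) ^ (-(d : ℝ) / 2) * (σ + ‖x‖) := by
  set u := ‖x - α • y‖
  set e := exp (-u ^ 2 / (2 * σ ^ 2))
  have hy : α * ‖y‖ ≤ u + ‖x‖ := by
    have := norm_sub_norm_le (α • y) x
    rw [norm_smul, norm_of_nonneg hα.le, norm_sub_rev] at this
    linarith
  have he : e ≤ 1 := exp_le_one_iff.mpr (by rw [neg_div]; exact neg_nonpos.mpr (by positivity))
  calc α * (gaussDensity d (α • y) σ x * ‖y‖)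
      = (2 * π * σ ^ 2) ^ (-(d : ℝ) / 2) * (e * (α * ‖y‖)) := by
        simp only [gaussDensity, e, u]; ring
    _ ≤ (2 * π * σ ^ 2) ^ (-(d : ℝ) / 2) * (u * e + e * ‖x‖) := by
        gcongr
        nlinarith [exp_pos (-u ^ 2 / (2 * σ ^ 2))]
    _ ≤ (2 * π * σ ^ 2) ^ (-(d : ℝ) / 2) * (σ + ‖x‖) := by
        gcongr
        · exact mul_exp_neg_sq_div_le hσ u
        · exact mul_le_of_le_one_left (norm_nonneg x) he

theorem integrable_gaussDensity_mul_smul (hα : 0 < α) (hσ : 0 < σ)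
    {q : EuclideanSpace ℝ (Fin d) → ℝ} (hq : Integrable q) (x : EuclideanSpace ℝ (Fin d)) :
    Integrable (fun y => (gaussDensity d (α • y) σ x * q y) • y) := by
  have hcont : Continuous fun y : EuclideanSpace ℝ (Fin d) => gaussDensity d (α • y) σ x • y := by
    unfold gaussDensity; fun_prop
  refine (hq.smul_bdd ((2 * π * σ ^ 2) ^ (-(d : ℝ) / 2) * (σ + ‖x‖) / α)
    hcont.aestronglyMeasurable (Filter.Eventually.of_forall fun y => ?_)).congr
    (Filter.Eventually.of_forall fun y => ?_)
  · rw [norm_smul, norm_of_nonneg (gaussDensity_nonneg _ x), le_div_iff₀ hα, mul_comm]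
    exact mul_gaussDensity_mul_norm_le hα hσ x y
  · simp only [Pi.smul_apply', smul_smul, mul_comm]

theorem denoiser_eq_inv_smul_integral (q : EuclideanSpace ℝ (Fin d) → ℝ)
    (x : EuclideanSpace ℝ (Fin d)) :
    denoiser d α σ q x
      = (marginal d α σ q x)⁻¹ • ∫ y, (gaussDensity d (α • y) σ x * q y) • y := by
  simp only [denoiser, posterior, div_eq_inv_mul, mul_smul, integral_smul]

end Gaussian

theorem gradient_posterior_general (d : ℕ) (αt σt : ℝ) (hα : 0 < αt) (hσ : 0 < σt)
    (q : EuclideanSpace ℝ (Fin d) → ℝ)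
    (hq_prob : ∫ x₁ : EuclideanSpace ℝ (Fin d), q x₁ = 1)
    (x₁ x : EuclideanSpace ℝ (Fin d))
    (hpos : 0 < marginal d αt σt q x)
    (hswap : HasGradientAt (marginal d αt σt q)
      (∫ y₁, ((σt ^ 2)⁻¹ * (gaussDensity d (αt • y₁) σt x * q y₁)) • (αt • y₁ - x)) x) :
    HasGradientAt (fun z => posterior d αt σt q x₁ z)
      ((posterior d αt σt q x₁ x * (αt / σt ^ 2)) • (x₁ - denoiser d αt σt q x)) x := by
  have hq : Integrable q := .of_integral_ne_zero (by simp [hq_prob])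
  have hm : marginal d αt σt q x ≠ 0 := hpos.ne'
  rw [integral_mul_smul_sub (.of_integral_ne_zero hm) (integrable_gaussDensity_mul_smul hα hσ hq x)]
    at hswap
  have hjoint := (hasGradientAt_gaussDensity d (αt • x₁) σt x).mul_const (q x₁)
  rw [denoiser_eq_inv_smul_integral]
  convert hjoint.div hswap hm using 1
  · rfl
  simp only [posterior, marginal] at hm ⊢
  match_scalars <;> field_simp
  ring

/-- Gradient of the posterior: `∇_x p_t(x₁|x) = p_t(x₁|x) (α_t/σ_t²) (x₁ − x̂₁)`,
assuming `q` is a probability density, `p_t(x) > 0`, and differentiation under the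
integral sign is valid for the marginal. -/
theorem gradient_posterior (d : ℕ) (αt σt : ℝ) (hα : 0 < αt) (hσ : 0 < σt)
    (q : EuclideanSpace ℝ (Fin d) → ℝ) (hq_nonneg : ∀ x₁, 0 ≤ q x₁)
    (hq_prob : ∫ x₁ : EuclideanSpace ℝ (Fin d), q x₁ = 1)
    (x₁ x : EuclideanSpace ℝ (Fin d))
    (hpos : 0 < marginal d αt σt q x)
    (hswap : HasGradientAt (marginal d αt σt q)
      (∫ y₁, ((σt ^ 2)⁻¹ * (gaussDensity d (αt • y₁) σt x * q y₁)) • (αt • y₁ - x)) x) :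
    HasGradientAt (fun z => posterior d αt σt q x₁ z)
      ((posterior d αt σt q x₁ x * (αt / σt ^ 2)) • (x₁ - denoiser d αt σt q x)) x :=
  gradient_posterior_general d αt σt hα hσ q hq_prob x₁ x hpos hswap
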